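/- arXiv:1412.5043 — 3 statements merged into one kernel-verified Lean document; each statement's English description precedes it below -/
import Mathlib

section
/- Let P = aX³ + bX² + cX + d ∈ ℤ[X] be irreducible over ℚ with a > 0 and gcd(a,b,c,d) = 1, let β be a root of P, and let F = ℚ(β), a cubic number field. If the discriminant disc(P) = 18abcd − 4b³d + b²c² − 4ac³ − 27a²d² is squarefree, then the ring of integers of F is O_F = ℤ ⊕ ℤ·(aβ) ⊕ ℤ·(aβ² + bβ). -/
open NumberField Polynomial
open scoped Matrix
open scoped nonZeroDivisors

noncomputable section

/-- Let `P = aX³ + bX² + cX + d ∈ ℤ[X]` be irreducible over `ℚ` with `a > 0` and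
`gcd(a,b,c,d) = 1`, let `β` be a root of `P` and `F = ℚ(β)` a cubic number field. If the
discriminant `disc(P) = 18abcd − 4b³d + b²c² − 4ac³ − 27a²d²` is squarefree, then the ring
of integers of `F` is `O_F = ℤ ⊕ ℤ·(aβ) ⊕ ℤ·(aβ² + bβ)`. -/
theorem stmt_16 (F : Type*) [Field F] [NumberField F]
    (hdeg : Module.finrank ℚ F = 3)
    (β : F) (hgen : Algebra.adjoin ℚ ({β} : Set F) = ⊤)
    (a b c d : ℤ) (ha : 0 < a)
    (hgcd : Nat.gcd (Nat.gcd (Int.gcd a b) c.natAbs) d.natAbs = 1)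
    (hroot : Polynomial.aeval β
      (Polynomial.C a * X ^ 3 + Polynomial.C b * X ^ 2 + Polynomial.C c * X +
        Polynomial.C d) = 0)
    (hirr : Irreducible
      ((Polynomial.C a * X ^ 3 + Polynomial.C b * X ^ 2 + Polynomial.C c * X +
        Polynomial.C d).map (Int.castRingHom ℚ)))
    (hsqf : Squarefree
      (18 * a * b * c * d - 4 * b ^ 3 * d + b ^ 2 * c ^ 2 - 4 * a * c ^ 3 -
        27 * a ^ 2 * d ^ 2)) :
    ∀ x : F, (∃ y : 𝓞 F, (y : F) = x) ↔
      x ∈ Submodule.span ℤ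
        ({1, (a : F) * β, (a : F) * β ^ 2 + (b : F) * β} : Set F) := by
  classical
  set γ : F := (a : F) * β with hγdef
  set θ : F := (a : F) * β ^ 2 + (b : F) * β with hθdef
  set M : Submodule ℤ F := Submodule.span ℤ ({1, γ, θ} : Set F) with hMdef
  have haQ : ((a : ℚ)) ≠ 0 := Int.cast_ne_zero.2 ha.ne'
  have hroot' : (a : F) * β ^ 3 + (b : F) * β ^ 2 + (c : F) * β + (d : F) = 0 := by
    have h := hroot
    simp only [map_add, map_mul, map_pow, map_intCast, aeval_C, aeval_X, algebraMap_int_eq,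
      eq_intCast] at h
    linear_combination h
  -- the minimal polynomial of β has degree 3
  have hrootQ : aeval β ((C a * X ^ 3 + C b * X ^ 2 + C c * X + C d).map
      (Int.castRingHom ℚ)) = 0 := by
    rwa [← algebraMap_int_eq, aeval_map_algebraMap]
  have hβint : IsIntegral ℚ β := IsIntegral.of_finite ℚ β
  have hmp3 : (minpoly ℚ β).natDegree = 3 := by
    obtain ⟨k, hk⟩ := minpoly.dvd ℚ β hrootQ
    rcases hirr.isUnit_or_isUnit hk with h | h
    · exact absurd h (minpoly.not_isUnit ℚ β)
    · have hmap : ((C a * X ^ 3 + C b * X ^ 2 + C c * X + C d).map (Int.castRingHom ℚ))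
          = C (a : ℚ) * X ^ 3 + C (b : ℚ) * X ^ 2 + C (c : ℚ) * X + C (d : ℚ) := by
        simp [Polynomial.map_add, Polynomial.map_mul, Polynomial.map_pow]
      have h3 : ((C a * X ^ 3 + C b * X ^ 2 + C c * X + C d).map
          (Int.castRingHom ℚ)).natDegree = 3 := by
        rw [hmap]; exact natDegree_cubic haQ
      have hk0 : (k : ℚ[X]) ≠ 0 := h.ne_zero
      have h4 : natDegree (minpoly ℚ β * k) = 3 := by rw [← hk]; exact h3
      rw [natDegree_mul (minpoly.ne_zero hβint) hk0,
        Polynomial.natDegree_eq_zero_of_isUnit h] at h4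
      simpa using h4
  -- 1, β, β² are linearly independent over ℚ
  have hindep : ∀ u v w : ℚ, u • (1 : F) + v • β + w • β ^ 2 = 0 →
      u = 0 ∧ v = 0 ∧ w = 0 := by
    intro u v w h
    by_cases hq : (C w * X ^ 2 + C v * X + C u : ℚ[X]) = 0
    · refine ⟨?_, ?_, ?_⟩
      · have := congrArg (fun p => Polynomial.coeff p 0) hq; simpa using this
      · have := congrArg (fun p => Polynomial.coeff p 1) hq; simpa using this
      · have := congrArg (fun p => Polynomial.coeff p 2) hq; simpa using this
    · exfalso
      have hev : aeval β (C w * X ^ 2 + C v * X + C u : ℚ[X]) = 0 := by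
        simp only [Algebra.smul_def, mul_one] at h
        simp only [map_add, map_mul, map_pow, aeval_C, aeval_X]
        linear_combination h
      have hle := minpoly.degree_le_of_ne_zero ℚ β hq hev
      have hdeg3 : (minpoly ℚ β).degree = 3 := by
        rw [degree_eq_natDegree (minpoly.ne_zero hβint), hmp3]; rfl
      rw [hdeg3] at hle
      have h2 := le_trans hle (degree_quadratic_le (a := w) (b := v) (c := u))
      norm_num at h2
  -- 1, γ, θ are linearly independent over ℚ
  have hli : LinearIndependent ℚ ![(1 : F), γ, θ] := by
    rw [Fintype.linearIndependent_iff]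
    intro g hg
    rw [Fin.sum_univ_three] at hg
    simp only [Matrix.cons_val_zero, Matrix.cons_val_one, Matrix.head_cons,
      Matrix.cons_val_two, Matrix.tail_cons] at hg
    have h0 : g 0 • (1 : F) + (g 1 * a + g 2 * b) • β + (g 2 * a) • β ^ 2 = 0 := by
      simp only [hγdef, hθdef, Algebra.smul_def, map_add, map_mul, map_intCast,
        mul_one] at hg ⊢
      linear_combination hg
    obtain ⟨h1, h2, h3⟩ := hindep _ _ _ h0
    have hg2 : g 2 = 0 := by
      rcases mul_eq_zero.1 h3 with h | h
      · exact h
      · exact absurd h haQ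
    have hg1 : g 1 = 0 := by
      rw [hg2, zero_mul, add_zero] at h2
      rcases mul_eq_zero.1 h2 with h | h
      · exact h
      · exact absurd h haQ
    intro i; fin_cases i
    · exact h1
    · exact hg1
    · exact hg2
  have hcard3 : Fintype.card (Fin 3) = Module.finrank ℚ F := by simp [hdeg]
  set e : Module.Basis (Fin 3) ℚ F := basisOfLinearIndependentOfCardEqFinrank hli hcard3
    with hedef
  have hecoe : ⇑e = ![(1 : F), γ, θ] :=
    coe_basisOfLinearIndependentOfCardEqFinrank hli hcard3
  have he0 : e 0 = 1 := by rw [hecoe]; rfl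
  have he1 : e 1 = γ := by rw [hecoe]; rfl
  have he2 : e 2 = θ := by rw [hecoe]; rfl
  -- coordinates
  have hrep : ∀ (u v w : ℚ) (i : Fin 3),
      e.repr (u • e 0 + v • e 1 + w • e 2) i = ![u, v, w] i := by
    intro u v w i
    rw [map_add, map_add, map_smul, map_smul, map_smul, e.repr_self, e.repr_self,
      e.repr_self]
    fin_cases i <;>
      simp [Finsupp.single_apply]
  -- multiplication table
  have c11 : γ * γ = (0 : ℚ) • e 0 + (-(b : ℚ)) • e 1 + ((a : ℚ)) • e 2 := by
    rw [he0, he1, he2]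
    simp only [Algebra.smul_def, map_neg, map_mul, map_intCast, map_zero, mul_one,
      hγdef, hθdef]
    ring
  have c12 : γ * θ = (-((a : ℚ) * d)) • e 0 + (-(c : ℚ)) • e 1 + (0 : ℚ) • e 2 := by
    rw [he0, he1, he2]
    simp only [Algebra.smul_def, map_neg, map_mul, map_intCast, map_zero, mul_one,
      hγdef, hθdef]
    linear_combination (a : F) * hroot'
  have c22 : θ * θ = (-((b : ℚ) * d)) • e 0 + (-(d : ℚ)) • e 1 + (-(c : ℚ)) • e 2 := by
    rw [he0, he1, he2]
    simp only [Algebra.smul_def, map_neg, map_mul, map_intCast, map_zero, mul_one,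
      hγdef, hθdef]
    linear_combination ((a : F) * β + (b : F)) * hroot'
  -- trace computations
  have htrace : ∀ x : F, Algebra.trace ℚ F x =
      e.repr (x * e 0) 0 + e.repr (x * e 1) 1 + e.repr (x * e 2) 2 := by
    intro x
    rw [Algebra.trace_eq_matrix_trace e, Matrix.trace_fin_three]
    simp [Algebra.leftMulMatrix_eq_repr_mul]
  have htrone : Algebra.trace ℚ F (1 : F) = 3 := by
    rw [htrace]
    simp [e.repr_self]
    norm_num
  have htrγ : Algebra.trace ℚ F γ = -(b : ℚ) := by
    rw [htrace]
    have g0 : γ * e 0 = e 1 := by rw [he0, he1, mul_one]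
    have g2 : γ * e 2 = γ * θ := by rw [he2]
    rw [g0, e.repr_self, show γ * e 1 = γ * γ by rw [he1], c11, g2, c12,
      hrep, hrep]
    simp [Finsupp.single_apply]
  have htrθ : Algebra.trace ℚ F θ = -2 * (c : ℚ) := by
    rw [htrace]
    have g0 : θ * e 0 = e 2 := by rw [he0, he2, mul_one]
    have g1 : θ * e 1 = γ * θ := by rw [he1, mul_comm]
    have g2 : θ * e 2 = θ * θ := by rw [he2]
    rw [g0, e.repr_self, g1, c12, g2, c22, hrep, hrep]
    simp [Finsupp.single_apply]
    ring
  have htre0 : Algebra.trace ℚ F (e 0) = 3 := by rw [he0]; exact htrone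
  have htre1 : Algebra.trace ℚ F (e 1) = -(b : ℚ) := by rw [he1]; exact htrγ
  have htre2 : Algebra.trace ℚ F (e 2) = -2 * (c : ℚ) := by rw [he2]; exact htrθ
  have htrall : ∀ u v w : ℚ, Algebra.trace ℚ F (u • e 0 + v • e 1 + w • e 2) =
      u * 3 + v * (-(b : ℚ)) + w * (-2 * (c : ℚ)) := by
    intro u v w
    rw [map_add, map_add, map_smul, map_smul, map_smul, htre0, htre1, htre2]
    simp [smul_eq_mul]
  -- the discriminant of the basis (1, γ, θ)
  have hD : Algebra.discr ℚ ⇑e =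
      ((18 * a * b * c * d - 4 * b ^ 3 * d + b ^ 2 * c ^ 2 - 4 * a * c ^ 3 -
        27 * a ^ 2 * d ^ 2 : ℤ) : ℚ) := by
    have t00 : Algebra.trace ℚ F (e 0 * e 0) = 3 := by
      rw [he0, mul_one]; exact htrone
    have t01 : Algebra.trace ℚ F (e 0 * e 1) = -(b : ℚ) := by
      rw [he0, one_mul]; exact htre1
    have t02 : Algebra.trace ℚ F (e 0 * e 2) = -2 * (c : ℚ) := by
      rw [he0, one_mul]; exact htre2
    have t10 : Algebra.trace ℚ F (e 1 * e 0) = -(b : ℚ) := by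
      rw [he0, mul_one]; exact htre1
    have t20 : Algebra.trace ℚ F (e 2 * e 0) = -2 * (c : ℚ) := by
      rw [he0, mul_one]; exact htre2
    have t11 : Algebra.trace ℚ F (e 1 * e 1) = (b : ℚ) ^ 2 - 2 * a * c := by
      rw [he1, c11, htrall]; ring
    have t12 : Algebra.trace ℚ F (e 1 * e 2) = (b : ℚ) * c - 3 * a * d := by
      rw [he1, he2, c12, htrall]; ring
    have t21 : Algebra.trace ℚ F (e 2 * e 1) = (b : ℚ) * c - 3 * a * d := by
      rw [he1, he2, mul_comm, c12, htrall]; ring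
    have t22 : Algebra.trace ℚ F (e 2 * e 2) = 2 * (c : ℚ) ^ 2 - 2 * b * d := by
      rw [he2, c22, htrall]; ring
    rw [Algebra.discr_def, Matrix.det_fin_three]
    simp only [Algebra.traceMatrix_apply, Algebra.traceForm_apply]
    rw [t00, t01, t02, t10, t11, t12, t20, t21, t22]
    push_cast
    ring
  -- integrality of γ and θ
  have hγint : IsIntegral ℤ γ := by
    refine ⟨X ^ 3 + (C b * X ^ 2 + C (a * c) * X + C (a ^ 2 * d)), ?_, ?_⟩
    · exact monic_X_pow_add (lt_of_le_of_lt degree_quadratic_le (by norm_num))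
    · rw [← aeval_def]
      simp only [map_add, map_mul, map_pow, map_intCast, aeval_C, aeval_X, algebraMap_int_eq,
        eq_intCast, hγdef]
      push_cast
      linear_combination (a : F) ^ 2 * hroot'
  have hθint : IsIntegral ℤ θ := by
    refine ⟨X ^ 3 + (C (2 * c) * X ^ 2 + C (c ^ 2 + b * d) * X +
      C (b * c * d - a * d ^ 2)), ?_, ?_⟩
    · exact monic_X_pow_add (lt_of_le_of_lt degree_quadratic_le (by norm_num))
    · rw [← aeval_def]
      simp only [map_add, map_mul, map_pow, map_intCast, aeval_C, aeval_X, algebraMap_int_eq,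
        eq_intCast, hθdef]
      push_cast
      linear_combination (((a : F) * β ^ 2 + (b : F) * β + (c : F)) *
        ((a : F) * β + (b : F)) - (d : F) * (a : F)) * hroot'
  -- M consists of integral elements
  have hMle : ∀ z ∈ M, IsIntegral ℤ z := by
    intro z hz
    have : M ≤ Subalgebra.toSubmodule (integralClosure ℤ F) := by
      rw [hMdef, Submodule.span_le]
      rintro w hw
      simp only [Set.mem_insert_iff, Set.mem_singleton_iff] at hw
      rcases hw with rfl | rfl | rfl
      · exact Subalgebra.one_mem _
      · exact hγint
      · exact hθint
    exact this hz
  -- the integral basis machinery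
  set ι := Module.Free.ChooseBasisIndex ℤ (𝓞 F) with hιdef
  have hcard : Fintype.card ι = 3 := by
    rw [← Module.finrank_eq_card_chooseBasisIndex, RingOfIntegers.rank, hdeg]
  set eqv : ι ≃ Fin 3 := Fintype.equivFinOfCardEq hcard with heqvdef
  set e' : Module.Basis ι ℚ F := e.reindex eqv.symm with he'def
  have he'coe : ∀ i, e' i = e (eqv i) := by
    intro i
    rw [he'def, Module.Basis.reindex_apply, Equiv.symm_symm]
  have hemem : ∀ j : Fin 3, e j ∈ M ∧ IsIntegral ℤ (e j) := by
    intro j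
    fin_cases j
    · show e 0 ∈ M ∧ IsIntegral ℤ (e 0)
      rw [he0]
      exact ⟨Submodule.subset_span (by simp), isIntegral_one⟩
    · show e 1 ∈ M ∧ IsIntegral ℤ (e 1)
      rw [he1]
      exact ⟨Submodule.subset_span (by simp), hγint⟩
    · show e 2 ∈ M ∧ IsIntegral ℤ (e 2)
      rw [he2]
      exact ⟨Submodule.subset_span (by simp), hθint⟩
  have hint' : ∀ i, IsIntegral ℤ (e' i) := by
    intro i; rw [he'coe]; exact (hemem _).2
  set y : ι → 𝓞 F := fun i => ⟨e' i, hint' i⟩ with hydef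
  have hycoe : ∀ i, (algebraMap (𝓞 F) F) (y i) = e' i := fun i => rfl
  set bas := RingOfIntegers.basis F with hbasdef
  set T : Matrix ι ι ℤ := Matrix.of fun i j => bas.repr (y i) j with hTdef
  have hyT : ∀ i, y i = ∑ j, T i j • bas j := by
    intro i
    exact (bas.sum_repr (y i)).symm
  have he'T : ∀ i, e' i = ∑ j, ((T i j : ℚ)) • integralBasis F j := by
    intro i
    calc e' i = algebraMap (𝓞 F) F (y i) := (hycoe i).symm
      _ = algebraMap (𝓞 F) F (∑ j, T i j • bas j) := by rw [← hyT]
      _ = ∑ j, ((T i j : ℚ)) • integralBasis F j := by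
          rw [map_sum]
          refine Finset.sum_congr rfl fun j _ => ?_
          rw [map_zsmul, integralBasis_apply, Int.cast_smul_eq_zsmul]
  have hvec : ⇑e' = Matrix.vecMul (integralBasis F)
      (((T.map (algebraMap ℤ ℚ))ᵀ).map (algebraMap ℚ F)) := by
    funext i
    rw [he'T i]
    simp only [Matrix.vecMul, dotProduct, Matrix.map_apply,
      Matrix.transpose_apply, Algebra.smul_def]
    refine Finset.sum_congr rfl fun j _ => ?_
    rw [mul_comm]
    norm_num
  have hre : Algebra.discr ℚ ⇑e' = Algebra.discr ℚ ⇑e := by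
    have h1 : ⇑e' = ⇑e ∘ ⇑(eqv.symm.symm) := by
      funext i; rw [Equiv.symm_symm, Function.comp_apply, he'coe]
    rw [h1, Algebra.discr_reindex]
  have hdet : (((T.map (algebraMap ℤ ℚ))ᵀ)).det = ((T.det : ℚ)) := by
    rw [Matrix.det_transpose,
      show T.map ⇑(algebraMap ℤ ℚ) = (algebraMap ℤ ℚ).mapMatrix T from rfl,
      ← RingHom.map_det]
    simp
  have hdiscr_rel : Algebra.discr ℚ ⇑e =
      ((T.det : ℚ)) ^ 2 * ((NumberField.discr F : ℚ)) := by
    rw [← hre, hvec, Algebra.discr_of_matrix_vecMul, hdet, coe_discr]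
  have hmainZ : (18 * a * b * c * d - 4 * b ^ 3 * d + b ^ 2 * c ^ 2 - 4 * a * c ^ 3 -
      27 * a ^ 2 * d ^ 2 : ℤ) = T.det ^ 2 * NumberField.discr F := by
    have := hD
    rw [hdiscr_rel] at this
    exact_mod_cast this.symm
  have hunit : IsUnit T.det := by
    refine hsqf T.det ⟨NumberField.discr F, ?_⟩
    rw [hmainZ]; ring
  have hTinv : Invertible T := T.invertibleOfIsUnitDet hunit
  have hbasmem : ∀ k, (integralBasis F k) ∈ M := by
    intro k
    have hbk : bas k = ∑ i, (⅟T) k i • y i := by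
      have h1 : ∑ i, (⅟T) k i • y i = ∑ j, ∑ i, ((⅟T) k i * T i j) • bas j := by
        rw [Finset.sum_comm]
        refine Finset.sum_congr rfl fun i _ => ?_
        rw [hyT i, Finset.smul_sum]
        exact Finset.sum_congr rfl fun j _ => (smul_smul _ _ _)
      rw [h1]
      have h2 : ∀ j ∈ Finset.univ, (∑ i, ((⅟T) k i * T i j) • bas j) =
          ((⅟T * T) k j) • bas j := by
        intro j _
        rw [← Finset.sum_smul, Matrix.mul_apply]
      rw [Finset.sum_congr rfl h2, invOf_mul_self]
      simp [Matrix.one_apply]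
    have h3 : (integralBasis F k) = ∑ i, (⅟T) k i • e' i := by
      rw [integralBasis_apply, hbk, map_sum]
      exact Finset.sum_congr rfl fun i _ => by rw [map_zsmul, hycoe]
    rw [h3]
    refine Submodule.sum_mem _ fun i _ => Submodule.smul_mem _ _ ?_
    rw [he'coe]
    exact (hemem _).1
  -- conclusion
  intro x
  constructor
  · rintro ⟨yx, rfl⟩
    have hx : (yx : F) ∈ Submodule.span ℤ (Set.range (integralBasis F)) := by
      rw [mem_span_integralBasis]
      exact ⟨yx, rfl⟩
    refine Submodule.span_le.2 ?_ hx
    rintro z ⟨k, rfl⟩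
    exact hbasmem k
  · intro hx
    exact ⟨⟨x, hMle x hx⟩, rfl⟩
end
end

section
/- Let P = aX³ + bX² + cX + d ∈ ℤ[X] be irreducible over ℚ with a > 0 and gcd(a,b,c,d) = 1, let β be a root of P, F = ℚ(β), suppose the ring of integers of F is O_F = ℤ ⊕ ℤ·(aβ) ⊕ ℤ·(aβ² + bβ), and let I = O_F + O_F·β. If a is a prime number, then 1 is primitive in I, i.e. there is no integer d₀ ≥ 2 with 1/d₀ ∈ I. -/
open NumberField Polynomial
open scoped nonZeroDivisors

noncomputable section

/-- Let `P = aX³ + bX² + cX + d ∈ ℤ[X]` be irreducible over `ℚ` with `a > 0` and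
`gcd(a,b,c,d) = 1`, let `β` be a root of `P`, `F = ℚ(β)`, suppose the ring of integers of
`F` is `O_F = ℤ ⊕ ℤ·(aβ) ⊕ ℤ·(aβ² + bβ)`, and let `I = O_F + O_F·β`. If `a` is a prime
number, then `1` is primitive in `I`, i.e. `1 ∈ I` and there is no integer `d₀ ≥ 2` with
`1/d₀ ∈ I`. -/
theorem stmt_18 (F : Type*) [Field F] [NumberField F]
    (hdeg : Module.finrank ℚ F = 3)
    (β : F) (hgen : Algebra.adjoin ℚ ({β} : Set F) = ⊤)
    (a b c d : ℤ) (ha : 0 < a)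
    (hgcd : Nat.gcd (Nat.gcd (Int.gcd a b) c.natAbs) d.natAbs = 1)
    (hroot : Polynomial.aeval β
      (Polynomial.C a * X ^ 3 + Polynomial.C b * X ^ 2 + Polynomial.C c * X +
        Polynomial.C d) = 0)
    (hirr : Irreducible
      ((Polynomial.C a * X ^ 3 + Polynomial.C b * X ^ 2 + Polynomial.C c * X +
        Polynomial.C d).map (Int.castRingHom ℚ)))
    (hOF : ∀ x : F, (∃ y : 𝓞 F, (y : F) = x) ↔
      x ∈ Submodule.span ℤ
        ({1, (a : F) * β, (a : F) * β ^ 2 + (b : F) * β} : Set F))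
    (I : FractionalIdeal (𝓞 F)⁰ F)
    (hI : ∀ x : F, x ∈ I ↔ x ∈ Submodule.span (𝓞 F) ({1, β} : Set F))
    (haprime : Prime a) :
    (1 : F) ∈ I ∧ ∀ d₀ : ℤ, 2 ≤ d₀ → (1 : F) / (d₀ : F) ∉ I := by
  have ha0 : (a : ℚ) ≠ 0 := Int.cast_ne_zero.mpr ha.ne'
  -- the cubic over ℚ
  set Q : ℚ[X] := (Polynomial.C a * X ^ 3 + Polynomial.C b * X ^ 2 + Polynomial.C c * X +
        Polynomial.C d).map (Int.castRingHom ℚ) with hQ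
  have hQeq : Q = Polynomial.C (a:ℚ) * X ^ 3 + Polynomial.C (b:ℚ) * X ^ 2 +
      Polynomial.C (c:ℚ) * X + Polynomial.C (d:ℚ) := by
    simp [hQ, Polynomial.map_add, Polynomial.map_mul]
  have hQdeg : Q.natDegree = 3 := by
    rw [hQeq]
    compute_degree!
    exact ha.ne'
  have hQroot : Polynomial.aeval β Q = 0 := by
    have hcast : (Int.castRingHom ℚ) = algebraMap ℤ ℚ := rfl
    rw [hQ, hcast, aeval_map_algebraMap]
    exact hroot
  have hmin := minpoly.eq_of_irreducible hirr hQroot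
  have hmindeg : (minpoly ℚ β).natDegree = 3 := by
    rw [← hmin, natDegree_mul (hirr.ne_zero) (by
      simp only [ne_eq, C_eq_zero, inv_eq_zero, leadingCoeff_eq_zero]
      exact hirr.ne_zero), natDegree_C, hQdeg]
  -- linear independence of 1, β, β²
  have hli : ∀ q₀ q₁ q₂ : ℚ, (q₀ : F) + (q₁ : F) * β + (q₂ : F) * β ^ 2 = 0 →
      q₀ = 0 ∧ q₁ = 0 ∧ q₂ = 0 := by
    intro q₀ q₁ q₂ h
    set p : ℚ[X] := Polynomial.C q₀ + Polynomial.C q₁ * X + Polynomial.C q₂ * X ^ 2 with hp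
    have haev : Polynomial.aeval β p = 0 := by
      simp only [hp, map_add, map_mul, aeval_C, aeval_X, map_pow, eq_ratCast]
      linear_combination h
    have hp0 : p = 0 := by
      by_contra hne
      have hdle := minpoly.degree_le_of_ne_zero ℚ β hne haev
      have h1 := natDegree_le_natDegree hdle
      have hle : p.natDegree ≤ 2 := by
        rw [hp]
        compute_degree
      omega
    refine ⟨?_, ?_, ?_⟩
    · have := congrArg (fun q => Polynomial.coeff q 0) hp0; simpa [hp] using this
    · have := congrArg (fun q => Polynomial.coeff q 1) hp0; simpa [hp] using this
    · have := congrArg (fun q => Polynomial.coeff q 2) hp0; simpa [hp] using this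
  have hroot' : (a : F) * β ^ 3 + (b : F) * β ^ 2 + (c : F) * β + (d : F) = 0 := by
    have := hroot
    simp only [map_add, map_mul, aeval_C, aeval_X, map_pow] at this
    simp only [eq_intCast] at this
    push_cast at this
    convert this using 2 <;> push_cast <;> ring
  constructor
  · rw [hI]
    exact Submodule.subset_span (Set.mem_insert _ _)
  · intro d₀ hd₀ hmem
    rw [hI, show ({1, β} : Set F) = {(1:F), β} from rfl] at hmem
    rw [Submodule.mem_span_pair] at hmem
    obtain ⟨u, v, huv⟩ := hmem
    obtain ⟨x₀, x', hx'⟩ := Submodule.mem_span_insert.mp ((hOF (u:F)).mp ⟨u, rfl⟩)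
    obtain ⟨x₁, x₂, hx2⟩ := Submodule.mem_span_pair.mp hx'.1
    obtain ⟨y₀, y', hy'⟩ := Submodule.mem_span_insert.mp ((hOF (v:F)).mp ⟨v, rfl⟩)
    obtain ⟨y₁, y₂, hy2⟩ := Submodule.mem_span_pair.mp hy'.1
    have hu : (u : F) = (x₀ : F) + (x₁ : F) * ((a:F)*β) + (x₂:F) * ((a:F)*β^2 + (b:F)*β) := by
      rw [hx'.2, ← hx2]; simp only [zsmul_eq_mul, smul_eq_mul]; push_cast; ring
    have hv : (v : F) = (y₀ : F) + (y₁ : F) * ((a:F)*β) + (y₂:F) * ((a:F)*β^2 + (b:F)*β) := by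
      rw [hy'.2, ← hy2]; simp only [zsmul_eq_mul, smul_eq_mul]; push_cast; ring
    have huv' : (1:F)/(d₀:F) = (u:F) * 1 + (v:F) * β := by
      rw [← huv]; simp [Algebra.smul_def]
    have hd₀0 : ((d₀:ℚ)) ≠ 0 := by positivity
    -- key equation
    have key : ((x₀ : ℚ) - d * y₂ - 1/d₀ : ℚ) + ((a*x₁ + b*x₂ + y₀ - c*y₂ : ℤ) : ℚ) * β
        + ((a*x₂ + a*y₁ : ℤ) : ℚ) * β ^ 2 = 0 := by
      have e1 : ((1/d₀ : ℚ) : F) = (1:F)/(d₀:F) := by push_cast; ring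
      rw [huv', hu, hv] at e1
      have e2 : (a:F) * β^3 = -((b:F)*β^2 + (c:F)*β + (d:F)) := by
        linear_combination hroot'
      push_cast
      push_cast at e1
      linear_combination -e1 - (y₂:F) * e2
    obtain ⟨k0, k1, k2⟩ := hli _ _ _ key
    have : (d₀ : ℚ) * ((x₀ : ℚ) - d * y₂) = 1 := by
      field_simp at k0
      linear_combination k0
    have : d₀ * (x₀ - d * y₂) = 1 := by exact_mod_cast this
    have := Int.le_of_dvd one_pos ⟨_, this.symm⟩
    omega
end
end

section
/- Let F be a totally real cubic field, C ≥ 1, and let I be a fractional ideal of F regarded as a lattice in ℝ³ with an LLL-reduced basis {b₁, b₂, b₃}. Assume: (1) 1 is primitive in I; (2) I has no nonzero element in the cuboid S₁; (3) ‖b₁‖ < √3/C; (4) covol(I) ≥ 10. Then the cardinality of G is at least (2/3)·C²·covol(I). -/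
open NumberField
open scoped nonZeroDivisors

noncomputable section

/-- Euclidean length of the image of `g ∈ F` in `ℝ³` under the three real embeddings. -/
def cnorm {F : Type*} [Field F] (σ : Fin 3 → (F →+* ℝ)) (g : F) : ℝ :=
  Real.sqrt (∑ i, (σ i g) ^ 2)

/-- The covolume of the lattice attached to `I` : `covol(I) = √Δ_F · N(I)`. -/
def ccovol (F : Type*) [Field F] [NumberField F] (I : FractionalIdeal (𝓞 F)⁰ F) : ℝ :=
  Real.sqrt (NumberField.discr F : ℝ) * (FractionalIdeal.absNorm I : ℝ)

/-- `1` is primitive in `I` : `1 ∈ I` and there is no integer `d ≥ 2` with `1/d ∈ I`. -/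
def primitiveOne (F : Type*) [Field F] [NumberField F]
    (I : FractionalIdeal (𝓞 F)⁰ F) : Prop :=
  (1 : F) ∈ I ∧ ∀ d : ℤ, 2 ≤ d → (1 : F) / (d : F) ∉ I

/-- `g` (viewed in `ℝ³`) lies in the cuboid
`S₁ = {(x₁,x₂,x₃) : |x_i| ≤ 1/C for all i, x₁² + x₂² + x₃² < 3/C²}`. -/
def inS1c {F : Type*} [Field F] (σ : Fin 3 → (F →+* ℝ)) (C : ℝ) (g : F) : Prop :=
  (∀ i, |σ i g| ≤ 1 / C) ∧ (∑ i, (σ i g) ^ 2) < 3 / C ^ 2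

/-- The set `G = {g ∈ I, g ≠ 0 : ‖g‖ < δ(I,C) = (6/π)·C²·covol(I), |g_i| < 1/C for some i}`. -/
def inGc (F : Type*) [Field F] [NumberField F] (σ : Fin 3 → (F →+* ℝ)) (C : ℝ)
    (I : FractionalIdeal (𝓞 F)⁰ F) (g : F) : Prop :=
  g ∈ I ∧ g ≠ 0 ∧ cnorm σ g < (6 / Real.pi) * C ^ 2 * ccovol F I ∧
    ∃ i, |σ i g| < 1 / C

/-- Dot product on `ℝ³`. -/
def dot3 (u w : Fin 3 → ℝ) : ℝ := ∑ i, u i * w i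

/-- First Gram–Schmidt vector `b₂* = b₂ − μ₂₁·b₁*` (indices `0`-based: `b₁* = v 0`). -/
def gs1 (v : Fin 3 → Fin 3 → ℝ) : Fin 3 → ℝ :=
  v 1 - (dot3 (v 1) (v 0) / dot3 (v 0) (v 0)) • v 0

/-- Second Gram–Schmidt vector `b₃* = b₃ − μ₃₁·b₁* − μ₃₂·b₂*`. -/
def gs2 (v : Fin 3 → Fin 3 → ℝ) : Fin 3 → ℝ :=
  v 2 - (dot3 (v 2) (v 0) / dot3 (v 0) (v 0)) • v 0
      - (dot3 (v 2) (gs1 v) / dot3 (gs1 v) (gs1 v)) • gs1 v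

/-- `(v 0, v 1, v 2)` is LLL-reduced : all Gram–Schmidt coefficients `μ_{ij}` satisfy
`|μ_{ij}| ≤ 1/2`, and `‖b_i* + μ_{i,i−1}·b_{i−1}*‖² ≥ (3/4)·‖b_{i−1}*‖²` for `i = 2, 3`. -/
def isLLL3 (v : Fin 3 → Fin 3 → ℝ) : Prop :=
  |dot3 (v 1) (v 0) / dot3 (v 0) (v 0)| ≤ 1 / 2 ∧
  |dot3 (v 2) (v 0) / dot3 (v 0) (v 0)| ≤ 1 / 2 ∧
  |dot3 (v 2) (gs1 v) / dot3 (gs1 v) (gs1 v)| ≤ 1 / 2 ∧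
  dot3 (v 1) (v 1) ≥ (3 / 4) * dot3 (v 0) (v 0) ∧
  dot3 (gs2 v + (dot3 (v 2) (gs1 v) / dot3 (gs1 v) (gs1 v)) • gs1 v)
       (gs2 v + (dot3 (v 2) (gs1 v) / dot3 (gs1 v) (gs1 v)) • gs1 v) ≥
    (3 / 4) * dot3 (gs1 v) (gs1 v)

lemma aux_sqrt3_lt : Real.sqrt 3 < 1.8 :=
  (Real.sqrt_lt' (by norm_num)).mpr (by norm_num)

lemma aux_sqrt3_gt : (1.7:ℝ) ≤ Real.sqrt 3 :=
  (Real.le_sqrt (by norm_num) (by norm_num)).mpr (by norm_num)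

lemma aux_quad (u a0 a1 a2 β kr : ℝ) (hu : 0 < u) (hk : 0 ≤ kr)
    (hs : a0^2 + a1^2 + a2^2 ≤ 3*u^2) (hβ : β^2 ≤ u^2) :
    β^2 + (kr*(a1 - a0) + β)^2 + (kr*(a2 - a0) + β)^2 ≤ ((3*kr + Real.sqrt 3)*u)^2 := by
  have h3 : Real.sqrt 3 ^ 2 = 3 := Real.sq_sqrt (by norm_num)
  have h17 : (1.7:ℝ) ≤ Real.sqrt 3 := aux_sqrt3_gt
  have hd : (a1-a0)^2 + (a2-a0)^2 ≤ 9*u^2 := by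
    nlinarith [sq_nonneg (a0+a1+a2), sq_nonneg (a1-a2)]
  have hcsq : (β*((a1-a0)+(a2-a0)))^2 ≤ 18*u^4 := by
    have h1 : ((a1-a0)+(a2-a0))^2 ≤ 18*u^2 := by nlinarith [sq_nonneg ((a1-a0)-(a2-a0))]
    calc (β*((a1-a0)+(a2-a0)))^2 = β^2 * ((a1-a0)+(a2-a0))^2 := by ring
      _ ≤ u^2 * (18*u^2) := by
          apply mul_le_mul hβ h1 (sq_nonneg _) (by positivity)
      _ = 18*u^4 := by ring
  have hu2 : (0:ℝ) < u^2 := by positivity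
  have hcross : β*((a1-a0)+(a2-a0)) ≤ 4.25*u^2 := by
    nlinarith [hcsq, hu2]
  have hcross2 : 2*kr*(β*((a1-a0)+(a2-a0))) ≤ 8.5*kr*u^2 := by
    have := mul_le_mul_of_nonneg_left hcross (by linarith : (0:ℝ) ≤ 2*kr)
    nlinarith [this]
  have hkru2 : (0:ℝ) ≤ kr*u^2 := by positivity
  have h17b : 8.5*kr*u^2 ≤ 6*Real.sqrt 3*kr*u^2 := by nlinarith [h17, hkru2]
  nlinarith [mul_le_mul_of_nonneg_left hd (sq_nonneg kr), hcross2, h17b, hβ, h3]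

lemma buildS {F : Type*} [Field F] [NumberField F] (σ : Fin 3 → (F →+* ℝ)) (C : ℝ) (hC : 1 ≤ C)
    (I : FractionalIdeal (𝓞 F)⁰ F) (b0 : F) (hb0I : b0 ∈ I) (h1I : (1:F) ∈ I)
    (hnr : ∀ a c : ℤ, a ≠ 0 → a • b0 + c • (1:F) ≠ 0)
    (hb1 : cnorm σ b0 < Real.sqrt 3 / C)
    (T : Finset ℕ) (mm : ℕ → ℤ)
    (hT1 : ∀ k ∈ T, 1 ≤ k)
    (hβ : ∀ k ∈ T, |(k:ℝ) * (σ 0 b0) + (mm k : ℝ)| < 1/C)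
    (hnorm : ∀ k ∈ T, (3*(k:ℝ) + Real.sqrt 3)/C < 6 / Real.pi * C^2 * ccovol F I) :
    ∃ S : Finset F, (↑S : Set F) ⊆ {g : F | inGc F σ C I g} ∧ S.card = 2 * T.card := by
  classical
  have hC0 : (0:ℝ) < C := lt_of_lt_of_le one_pos hC
  set f : ℕ → F := fun k => (k:ℤ) • b0 + mm k • (1:F) with hf
  have hfinj : Function.Injective f := by
    intro k k' hkk
    by_contra hne
    have hz : ((k:ℤ) - (k':ℤ)) • b0 + (mm k - mm k') • (1:F) = 0 := by
      rw [sub_smul, sub_smul]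
      have h0 : f k - f k' = 0 := by rw [hkk]; simp
      calc (k:ℤ) • b0 - (k':ℤ) • b0 + (mm k • (1:F) - mm k' • (1:F))
          = f k - f k' := by simp only [hf]; abel
        _ = 0 := h0
    exact hnr _ _ (sub_ne_zero.mpr (by exact_mod_cast hne)) hz
  have hfneg : ∀ k k' : ℕ, 1 ≤ k → 1 ≤ k' → f k ≠ -(f k') := by
    intro k k' hk hk' heq
    have hz : ((k:ℤ) + (k':ℤ)) • b0 + (mm k + mm k') • (1:F) = 0 := by
      rw [add_smul, add_smul]
      have h0 : f k + f k' = 0 := by rw [heq]; simp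
      calc (k:ℤ) • b0 + (k':ℤ) • b0 + (mm k • (1:F) + mm k' • (1:F))
          = f k + f k' := by simp only [hf]; abel
        _ = 0 := h0
    have hkz : ((k:ℤ) + (k':ℤ)) ≠ 0 := by positivity
    exact hnr _ _ hkz hz
  have hσf : ∀ (k : ℕ) (i : Fin 3), σ i (f k) = (k:ℝ) * σ i b0 + (mm k : ℝ) := by
    intro k i
    rw [hf]
    simp only [zsmul_eq_mul, map_add, map_mul, map_intCast, map_one, mul_one]
    push_cast
    ring
  have hfI : ∀ k : ℕ, f k ∈ I := by
    intro k
    rw [← FractionalIdeal.mem_coe]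
    exact Submodule.add_mem _ (zsmul_mem (FractionalIdeal.mem_coe.mpr hb0I) _)
      (zsmul_mem (FractionalIdeal.mem_coe.mpr h1I) _)
  have hs3 : (σ 0 b0)^2 + (σ 1 b0)^2 + (σ 2 b0)^2 ≤ 3*(1/C)^2 := by
    have h1 : cnorm σ b0 < Real.sqrt 3 / C := hb1
    rw [cnorm, Fin.sum_univ_three] at h1
    have hpos : (0:ℝ) < Real.sqrt 3 / C := by positivity
    have h2 := (Real.sqrt_lt' hpos).mp h1
    have h3 : Real.sqrt 3 ^ 2 = 3 := Real.sq_sqrt (by norm_num)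
    have : (Real.sqrt 3 / C)^2 = 3*(1/C)^2 := by rw [div_pow, h3]; ring
    linarith [this ▸ h2]
  have hcn : ∀ k ∈ T, cnorm σ (f k) ≤ (3*(k:ℝ) + Real.sqrt 3)/C := by
    intro k hk
    have hβk := hβ k hk
    have hβ2 : ((k:ℝ) * σ 0 b0 + (mm k:ℝ))^2 ≤ (1/C)^2 := by
      have h := abs_lt.mp hβk
      nlinarith [h.1, h.2]
    have key := aux_quad (1/C) (σ 0 b0) (σ 1 b0) (σ 2 b0)
      ((k:ℝ) * σ 0 b0 + (mm k:ℝ)) (k:ℝ) (by positivity) (by positivity) hs3 hβ2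
    rw [cnorm, Fin.sum_univ_three]
    have hrw : (σ 0 (f k))^2 + (σ 1 (f k))^2 + (σ 2 (f k))^2
        = (((k:ℝ) * σ 0 b0 + (mm k:ℝ)))^2
          + ((k:ℝ)*(σ 1 b0 - σ 0 b0) + ((k:ℝ) * σ 0 b0 + (mm k:ℝ)))^2
          + ((k:ℝ)*(σ 2 b0 - σ 0 b0) + ((k:ℝ) * σ 0 b0 + (mm k:ℝ)))^2 := by
      rw [hσf k 0, hσf k 1, hσf k 2]; ring
    rw [hrw]
    calc Real.sqrt _ ≤ Real.sqrt (((3*(k:ℝ) + Real.sqrt 3)*(1/C))^2) := Real.sqrt_le_sqrt key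
      _ = (3*(k:ℝ) + Real.sqrt 3)*(1/C) := Real.sqrt_sq (by positivity)
      _ = (3*(k:ℝ) + Real.sqrt 3)/C := by ring
  have hcneg : ∀ x : F, cnorm σ (-x) = cnorm σ x := by
    intro x
    rw [cnorm, cnorm]
    congr 1
    apply Finset.sum_congr rfl
    intro i _
    rw [map_neg]; ring
  have hmemG : ∀ k ∈ T, inGc F σ C I (f k) ∧ inGc F σ C I (-(f k)) := by
    intro k hk
    have hkz : ((k:ℤ)) ≠ 0 := by
      have := hT1 k hk; omega
    have h1 : f k ≠ 0 := hnr (k:ℤ) (mm k) hkz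
    have h4 : cnorm σ (f k) < 6 / Real.pi * C^2 * ccovol F I :=
      lt_of_le_of_lt (hcn k hk) (hnorm k hk)
    have h5 : |σ 0 (f k)| < 1/C := by rw [hσf k 0]; exact hβ k hk
    refine ⟨⟨hfI k, h1, h4, ⟨0, h5⟩⟩, ⟨?_, ?_, ?_, ⟨0, ?_⟩⟩⟩
    · rw [← FractionalIdeal.mem_coe]
      exact Submodule.neg_mem _ (FractionalIdeal.mem_coe.mpr (hfI k))
    · exact neg_ne_zero.mpr h1
    · rw [hcneg]; exact h4
    · rw [map_neg, abs_neg]; exact h5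
  refine ⟨T.image f ∪ T.image (fun k => -(f k)), ?_, ?_⟩
  · intro x hx
    simp only [Finset.coe_union, Set.mem_union, Finset.coe_image, Set.mem_image] at hx
    rcases hx with ⟨k, hk, rfl⟩ | ⟨k, hk, rfl⟩
    · exact (hmemG k (by exact_mod_cast hk)).1
    · exact (hmemG k (by exact_mod_cast hk)).2
  · have hdisj : Disjoint (T.image f) (T.image (fun k => -(f k))) := by
      rw [Finset.disjoint_left]
      rintro x hx1 hx2
      rcases Finset.mem_image.mp hx1 with ⟨k, hk, rfl⟩
      rcases Finset.mem_image.mp hx2 with ⟨k', hk', hkk⟩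
      exact hfneg k k' (hT1 k hk) (hT1 k' hk') hkk.symm
    rw [Finset.card_union_of_disjoint hdisj, Finset.card_image_of_injective _ hfinj,
      Finset.card_image_of_injective _ (fun a b h => hfinj (neg_injective h))]
    omega

set_option maxHeartbeats 2000000 in
/-- Let `F` be a totally real cubic field, `C ≥ 1`, and `I` a fractional ideal of `F`
regarded as a lattice in `ℝ³` with an LLL-reduced basis `{b₁, b₂, b₃}`. Assume: (1) `1` is
primitive in `I`; (2) `I` has no nonzero element in the cuboid `S₁`; (3) `‖b₁‖ < √3/C`;
(4) `covol(I) ≥ 10`. Then `G` has at least `(2/3)·C²·covol(I)` elements. -/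
theorem stmt_19 (F : Type*) [Field F] [NumberField F]
    (hdeg : Module.finrank ℚ F = 3)
    (σ : Fin 3 → (F →+* ℝ)) (hσ : Function.Injective σ)
    (C : ℝ) (hC : 1 ≤ C) (I : FractionalIdeal (𝓞 F)⁰ F)
    (b : Fin 3 → F) (hbI : ∀ i, b i ∈ I)
    (hspan : ∀ g : F, g ∈ I → ∃ s : Fin 3 → ℤ, g = ∑ i, s i • b i)
    (hindep : ∀ s : Fin 3 → ℤ, (∑ i, s i • b i : F) = 0 → ∀ i, s i = 0)
    (hLLL : isLLL3 (fun i j => σ j (b i)))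
    (hprim : primitiveOne F I)
    (hS1 : ∀ g : F, g ∈ I → g ≠ 0 → ¬ inS1c σ C g)
    (hb1 : cnorm σ (b 0) < Real.sqrt 3 / C)
    (hcovol : 10 ≤ ccovol F I) :
    ∃ S : Finset F, (↑S : Set F) ⊆ {g : F | inGc F σ C I g} ∧
      (2 / 3) * C ^ 2 * ccovol F I ≤ (S.card : ℝ) := by

  classical
  have hC0 : (0:ℝ) < C := lt_of_lt_of_le one_pos hC
  set V : ℝ := ccovol F I with hV
  have hV0 : (0:ℝ) < V := by linarith
  set α : ℝ := σ 0 (b 0) with hα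
  -- b 0 ≠ 0
  have hb0ne : b 0 ≠ 0 := by
    intro h0
    have hsum : (∑ i, (fun i => if i = 0 then (1:ℤ) else 0) i • b i : F) = 0 := by
      rw [Fin.sum_univ_three]
      simp [h0]
    have := hindep _ hsum 0
    simp at this
  -- strict bound on sum of squares
  have hssq : (σ 0 (b 0))^2 + (σ 1 (b 0))^2 + (σ 2 (b 0))^2 < 3/C^2 := by
    have h1 := hb1
    rw [cnorm, Fin.sum_univ_three] at h1
    have hpos : (0:ℝ) < Real.sqrt 3 / C := by positivity
    have h2 := (Real.sqrt_lt' hpos).mp h1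
    have h3 : (Real.sqrt 3 / C)^2 = 3/C^2 := by
      rw [div_pow, Real.sq_sqrt (by norm_num : (0:ℝ) ≤ 3)]
    linarith [h3 ▸ h2]
  -- key non-rationality
  have hnr : ∀ a c : ℤ, a ≠ 0 → a • (b 0) + c • (1:F) ≠ 0 := by
    intro a c ha heq
    have har : ((a:ℝ)) ≠ 0 := Int.cast_ne_zero.mpr ha
    obtain ⟨r, hr⟩ : ∃ r : ℝ, ∀ i : Fin 3, σ i (b 0) = r := by
      refine ⟨-(c:ℝ)/(a:ℝ), fun i => ?_⟩
      have h0 : σ i ((a:ℤ) • (b 0) + c • (1:F)) = 0 := by rw [heq]; exact map_zero _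
      rw [map_add] at h0
      rw [zsmul_eq_mul, zsmul_eq_mul, map_mul, map_mul, map_intCast, map_intCast, map_one] at h0
      field_simp
      linarith [h0]
    have hr2 : 3*r^2 < 3/C^2 := by
      have h0 := hr 0; have h1 := hr 1; have h2 := hr 2
      rw [h0, h1, h2] at hssq
      linarith
    have habs : ∀ i : Fin 3, |σ i (b 0)| ≤ 1/C := by
      intro i
      rw [hr i]
      have hsq : r^2 ≤ (1/C)^2 := by
        rw [div_pow, one_pow]
        linarith [(by ring : 3*(1/C^2) = 3/(C^2))]
      have h := Real.sqrt_le_sqrt hsq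
      rwa [Real.sqrt_sq_eq_abs, Real.sqrt_sq (by positivity : (0:ℝ) ≤ 1/C)] at h
    have hsum : (∑ i, (σ i (b 0)) ^ 2) < 3 / C ^ 2 := by
      rw [Fin.sum_univ_three, hr 0, hr 1, hr 2]
      linarith [hr2]
    exact hS1 (b 0) (hbI 0) hb0ne ⟨habs, hsum⟩
  have hπ : Real.pi < 3.15 := by
    have := Real.pi_lt_d2; linarith
  have hπ0 : (0:ℝ) < Real.pi := Real.pi_pos
  have h6π : (40:ℝ)/21 ≤ 6/Real.pi := by
    rw [div_le_div_iff₀ (by norm_num) hπ0]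
    nlinarith
  have hA10 : (10:ℝ) ≤ C^2*V := by nlinarith
  rcases lt_or_ge C 2 with hC2 | hC2
  -- Case C < 2
  · set K : ℕ := ⌈C^2*V/3⌉₊ with hK
    have hKge : C^2*V/3 ≤ (K:ℝ) := Nat.le_ceil _
    have hKlt : (K:ℝ) < C^2*V/3 + 1 := Nat.ceil_lt_add_one (by positivity)
    obtain ⟨S, hS1', hS2⟩ := buildS σ C hC I (b 0) (hbI 0) hprim.1 hnr hb1
      (Finset.Icc 1 K) (fun k => -round ((k:ℝ)*α))
      (fun k hk => (Finset.mem_Icc.mp hk).1)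
      (by
        intro k hk
        push_cast
        have h1 := abs_sub_round ((k:ℝ)*α)
        have h2 : (1:ℝ)/2 < 1/C := by
          apply one_div_lt_one_div_of_lt hC0 hC2
        calc |(k:ℝ)*α + -(round ((k:ℝ)*α):ℝ)| = |(k:ℝ)*α - (round ((k:ℝ)*α):ℝ)| := by
              ring_nf
          _ ≤ 1/2 := h1
          _ < 1/C := h2)
      (by
        intro k hk
        have hkK : k ≤ K := (Finset.mem_Icc.mp hk).2
        have h1 : (3*(k:ℝ) + Real.sqrt 3)/C ≤ 3*(k:ℝ) + Real.sqrt 3 :=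
          div_le_self (by positivity) hC
        have h2 : 3*(K:ℝ) + Real.sqrt 3 < 6/Real.pi * C^2 * V := by
          have h3 : 3*(K:ℝ) < C^2*V + 3 := by linarith
          have h4 : Real.sqrt 3 < 1.8 := aux_sqrt3_lt
          have h5 : (40:ℝ)/21 * (C^2*V) ≤ 6/Real.pi * (C^2*V) :=
            mul_le_mul_of_nonneg_right h6π (by positivity)
          have h6 : 6/Real.pi * C^2 * V = 6/Real.pi * (C^2*V) := by ring
          rw [h6]
          linarith
        have h7 : 3*(K:ℝ) + Real.sqrt 3 ≥ 3*(k:ℝ) + Real.sqrt 3 := by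
          have : (k:ℝ) ≤ K := by exact_mod_cast hkK
          linarith
        linarith)
    refine ⟨S, hS1', ?_⟩
    rw [hS2]
    have hcard : (Finset.Icc 1 K).card = K := by
      rw [Nat.card_Icc]; omega
    rw [hcard]
    push_cast
    linarith
  -- Case 2 ≤ C
  · set n : ℕ := ⌈C⌉₊ with hn
    have hnC : C ≤ (n:ℝ) := Nat.le_ceil C
    have hn1 : (n:ℝ) < C + 1 := Nat.ceil_lt_add_one (le_of_lt hC0)
    have hnz : n ≠ 0 := by
      have h2n : (2:ℝ) ≤ (n:ℝ) := by linarith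
      have : (2:ℕ) ≤ n := by exact_mod_cast h2n
      omega
    have hnpos : (0:ℝ) < (n:ℝ) := lt_of_lt_of_le hC0 hnC
    set K : ℕ := ⌈(11/20)*(C^3*V)⌉₊ with hK
    have hKge : (11/20)*(C^3*V) ≤ (K:ℝ) := Nat.le_ceil _
    have hKlt : (K:ℝ) < (11/20)*(C^3*V) + 1 :=
      Nat.ceil_lt_add_one (by nlinarith [pow_pos hC0 3, mul_pos (pow_pos hC0 3) hV0])
    set m : ℕ := ⌈C^2*V/3⌉₊ with hm
    have hmge : C^2*V/3 ≤ (m:ℝ) := Nat.le_ceil _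
    have hmlt : (m:ℝ) < C^2*V/3 + 1 :=
      Nat.ceil_lt_add_one (by nlinarith [mul_nonneg (sq_nonneg C) (le_of_lt hV0)])
    clear_value n K m
    have hnm : n * m ≤ K := by
      have hr : ((n*m:ℕ):ℝ) ≤ (K:ℝ) := by
        push_cast
        have e1 : 0 ≤ (C - 2) * (C^2*V) :=
          mul_nonneg (by linarith) (mul_nonneg (sq_nonneg C) (le_of_lt hV0))
        have e2 : 0 ≤ (V - 10) * C^2 := mul_nonneg (by linarith) (sq_nonneg C)
        have e3 : 0 ≤ C^2 - C - 1 := by nlinarith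
        have key : (C+1)*(C^2*V/3+1) ≤ (11/20)*(C^3*V) := by nlinarith [e1, e2, e3]
        have h2 : (n:ℝ)*(m:ℝ) ≤ (C+1)*(C^2*V/3+1) :=
          mul_le_mul (le_of_lt hn1) (le_of_lt hmlt) (Nat.cast_nonneg m) (by linarith)
        linarith
      exact_mod_cast hr
    set φ : ℕ → ℕ := fun k => (⌊Int.fract ((k:ℝ)*α) * (n:ℝ)⌋).toNat with hφ
    have hmaps : ∀ k ∈ Finset.range (K+1), φ k ∈ Finset.range n := by
      intro k _
      rw [Finset.mem_range, hφ]
      rw [Int.toNat_lt' (Nat.pos_of_ne_zero hnz), Int.floor_lt]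
      push_cast
      calc Int.fract ((k:ℝ)*α) * (n:ℝ) < 1 * (n:ℝ) :=
            mul_lt_mul_of_pos_right (Int.fract_lt_one _) hnpos
        _ = (n:ℝ) := one_mul _
    have hcard : (Finset.range n).card * m < (Finset.range (K+1)).card := by
      rw [Finset.card_range, Finset.card_range]; omega
    obtain ⟨y, hy, hfib⟩ := Finset.exists_lt_card_fiber_of_mul_lt_card_of_maps_to hmaps hcard
    set F0 := Finset.filter (fun x => φ x = y) (Finset.range (K+1)) with hF0
    have hF0ne : F0.Nonempty := Finset.card_pos.mp (by omega)
    set k0 : ℕ := F0.min' hF0ne with hk0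
    have hk0F : k0 ∈ F0 := Finset.min'_mem _ _
    have hfr : ∀ k, k ∈ F0 →
        (y:ℝ) ≤ Int.fract ((k:ℝ)*α) * (n:ℝ) ∧ Int.fract ((k:ℝ)*α) * (n:ℝ) < (y:ℝ)+1 := by
      intro k hk
      have hky : φ k = y := (Finset.mem_filter.mp hk).2
      have hfl0 : 0 ≤ ⌊Int.fract ((k:ℝ)*α) * (n:ℝ)⌋ :=
        Int.floor_nonneg.mpr (mul_nonneg (Int.fract_nonneg _) (by positivity))
      have heqz : ⌊Int.fract ((k:ℝ)*α) * (n:ℝ)⌋ = (y:ℤ) := by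
        have hky' : (⌊Int.fract ((k:ℝ)*α) * (n:ℝ)⌋).toNat = y := hky
        omega
      have hb := Int.floor_eq_iff.mp heqz
      constructor
      · exact_mod_cast hb.1
      · have := hb.2; push_cast at this ⊢; linarith
    set mm : ℕ → ℤ := fun j => ⌊(k0:ℝ)*α⌋ - ⌊((j + k0 : ℕ):ℝ)*α⌋ with hmm
    set T := (F0.erase k0).image (fun k => k - k0) with hT
    have hTmem : ∀ j ∈ T, ∃ k', k' ∈ F0 ∧ k0 < k' ∧ k' ≤ K ∧ j = k' - k0 := by
      intro j hj
      rw [hT, Finset.mem_image] at hj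
      obtain ⟨k', hk', rfl⟩ := hj
      have h1 := Finset.min'_le F0 k' (Finset.mem_of_mem_erase hk')
      have h2 := Finset.ne_of_mem_erase hk'
      have h3 : k' ∈ Finset.range (K+1) := (Finset.mem_filter.mp (Finset.mem_of_mem_erase hk')).1
      rw [Finset.mem_range] at h3
      exact ⟨k', Finset.mem_of_mem_erase hk', by omega, by omega, rfl⟩
    have hTcard : m ≤ T.card := by
      have hinj : Set.InjOn (fun k => k - k0) ↑(F0.erase k0) := by
        intro x hx y' hy' hxy
        have hx' : k0 ≤ x := Finset.min'_le _ _ (Finset.mem_of_mem_erase (Finset.mem_coe.mp hx))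
        have hy'' : k0 ≤ y' := Finset.min'_le _ _ (Finset.mem_of_mem_erase (Finset.mem_coe.mp hy'))
        simp only at hxy
        omega
      rw [hT, Finset.card_image_of_injOn hinj, Finset.card_erase_of_mem hk0F]
      omega
    obtain ⟨S, hSsub, hScard⟩ := buildS σ C hC I (b 0) (hbI 0) hprim.1 hnr hb1 T mm
      (by
        intro j hj
        obtain ⟨k', _, hlt, _, rfl⟩ := hTmem j hj
        omega)
      (by
        intro j hj
        obtain ⟨k', hk'F, hlt, hle, rfl⟩ := hTmem j hj
        have hjk : (k' - k0) + k0 = k' := by omega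
        have hE : ((k' - k0 : ℕ):ℝ)*α + ((mm (k' - k0)):ℝ)
            = Int.fract ((k':ℝ)*α) - Int.fract ((k0:ℝ)*α) := by
          rw [hmm]
          simp only [hjk]
          rw [← Int.self_sub_floor ((k':ℝ)*α), ← Int.self_sub_floor ((k0:ℝ)*α)]
          push_cast [Nat.cast_sub (le_of_lt hlt)]
          ring
        rw [hE, abs_lt]
        have h1 := hfr k' hk'F
        have h0 := hfr k0 hk0F
        have h1n : 1/(n:ℝ) ≤ 1/C := one_div_le_one_div_of_le hC0 hnC
        constructor
        · have : Int.fract ((k0:ℝ)*α) - Int.fract ((k':ℝ)*α) < 1/(n:ℝ) := by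
            rw [lt_div_iff₀ hnpos]
            nlinarith [h0.2, h1.1]
          linarith
        · have : Int.fract ((k':ℝ)*α) - Int.fract ((k0:ℝ)*α) < 1/(n:ℝ) := by
            rw [lt_div_iff₀ hnpos]
            nlinarith [h1.2, h0.1]
          linarith)
      (by
        intro j hj
        obtain ⟨k', hk'F, hlt, hle, rfl⟩ := hTmem j hj
        have hjK : ((k' - k0 : ℕ):ℝ) ≤ (K:ℝ) := by
          have : (k' - k0 : ℕ) ≤ K := by omega
          exact_mod_cast this
        have hstep : (3*((k' - k0 : ℕ):ℝ) + Real.sqrt 3)/C ≤ (3*(K:ℝ) + Real.sqrt 3)/C := by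
          gcongr
        refine lt_of_le_of_lt hstep ?_
        rw [div_lt_iff₀ hC0]
        have hB : (80:ℝ) ≤ C^3*V := by nlinarith
        have h5 : (40/21)*(C^3*V) ≤ 6/Real.pi*(C^3*V) :=
          mul_le_mul_of_nonneg_right h6π (by positivity)
        have h4 : Real.sqrt 3 < 1.8 := aux_sqrt3_lt
        have heq2 : 6/Real.pi * C^2 * V * C = 6/Real.pi*(C^3*V) := by ring
        rw [heq2]
        linarith)
    refine ⟨S, hSsub, ?_⟩
    rw [hScard]
    have hc1 : (m:ℝ) ≤ (T.card:ℝ) := by exact_mod_cast hTcard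
    push_cast
    linarith
end
end
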